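/- Assume 0 < τ < τ*. Define W_0 = 0 and W_{k+1} = B̃_{-1}(τ,W_k) + B̃_1(τ) W_k² for k = 0,1,…. Then 0 ≤ W_k ≤ W_{k+1} and W_{k+1}1 ≤ 1 for all k; the limit W_min = lim_{k→∞} W_k exists, is substochastic, solves equation (QW), and satisfies W_min ≤ Ŵ for every substochastic solution Ŵ of (QW). -/

import Mathlib

open MeasureTheory Matrix Filter

noncomputable section

/-- Entrywise Bochner integral over `(0,∞)` of a matrix-valued function. -/
def intP {n : ℕ} (f : ℝ → Matrix (Fin n) (Fin n) ℝ) : Matrix (Fin n) (Fin n) ℝ :=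
  Matrix.of fun i j => ∫ x in Set.Ioi (0:ℝ), f x i j

/-- Matrix exponential. -/
def mexp {n : ℕ} (A : Matrix (Fin n) (Fin n) ℝ) : Matrix (Fin n) (Fin n) ℝ :=
  NormedSpace.exp A

/-- `∫_0^x e^{Gs} ds` (entrywise). -/
def cumExp {n : ℕ} (G : Matrix (Fin n) (Fin n) ℝ) (x : ℝ) : Matrix (Fin n) (Fin n) ℝ :=
  Matrix.of fun i j => ∫ s in (0:ℝ)..x, mexp (s • G) i j

/-- Irreducibility of a square matrix: for all `i ≠ j` there is a path from `i` to `j`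
along nonzero entries. -/
def MatIrr {m : Type*} (A : Matrix m m ℝ) : Prop :=
  ∀ i j : m, i ≠ j → ∃ (r : ℕ) (p : ℕ → m), p 0 = i ∧ p r = j ∧
    ∀ k < r, A (p k) (p (k+1)) ≠ 0

/-- Spectral radius of a real matrix: supremum of the moduli of its complex eigenvalues. -/
def specRad {m : Type*} [Fintype m] [DecidableEq m] (A : Matrix m m ℝ) : ℝ :=
  sSup ((fun z : ℂ => ‖z‖) '' (spectrum ℂ (A.map (algebraMap ℝ ℂ))))

/-- `A` is an M-matrix: `A = s•I − B` with `B ≥ 0` entrywise and `ρ(B) ≤ s`. -/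
def IsMMatrix {m : Type*} [Fintype m] [DecidableEq m] (A : Matrix m m ℝ) : Prop :=
  ∃ (s : ℝ) (B : Matrix m m ℝ), (∀ i j, 0 ≤ B i j) ∧ specRad B ≤ s ∧
    A = s • (1 : Matrix m m ℝ) - B

/-- `A = M − N` is a regular splitting: `M` invertible, `M⁻¹ ≥ 0`, `N ≥ 0`. -/
def RegSplit {n : ℕ} (A M N : Matrix (Fin n) (Fin n) ℝ) : Prop :=
  A = M - N ∧ IsUnit M.det ∧ (∀ i j, 0 ≤ M⁻¹ i j) ∧ (∀ i j, 0 ≤ N i j)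

/-- The complex characteristic roots (eigenvalues with algebraic multiplicity)
of a real matrix. -/
def cRoots {n : ℕ} (Y : Matrix (Fin n) (Fin n) ℝ) : Multiset ℂ :=
  ((Y.map (algebraMap ℝ ℂ)).charpoly).roots

/-- substochastic matrix -/
def Substoch {n : ℕ} (W : Matrix (Fin n) (Fin n) ℝ) : Prop :=
  (∀ i j, 0 ≤ W i j) ∧ ∀ i, ∑ j, W i j ≤ 1

/-- stochastic matrix -/
def StochMat {n : ℕ} (W : Matrix (Fin n) (Fin n) ℝ) : Prop :=
  (∀ i j, 0 ≤ W i j) ∧ ∀ i, ∑ j, W i j = 1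

/-- subgenerator -/
def IsSubGen {n : ℕ} (Y : Matrix (Fin n) (Fin n) ℝ) : Prop :=
  (∀ i j, i ≠ j → 0 ≤ Y i j) ∧ ∀ i, ∑ j, Y i j ≤ 0

/-- generator -/
def IsGen {n : ℕ} (Y : Matrix (Fin n) (Fin n) ℝ) : Prop :=
  (∀ i j, i ≠ j → 0 ≤ Y i j) ∧ ∀ i, ∑ j, Y i j = 0

/-- The data of a Markov-modulated Lévy process: phase generator `Q`, Brownian
drifts `a` and volatilities `s` (denoted `σ` in the paper), Lévy densities `ν`,
phase-change jump densities `μ`, and `U0 = U(0)` (the atoms at 0 of the jump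
distributions). -/
structure Dat (n : ℕ) where
  Q : Matrix (Fin n) (Fin n) ℝ
  a : Fin n → ℝ
  s : Fin n → ℝ
  ν : Fin n → ℝ → ℝ
  μ : Fin n → Fin n → ℝ → ℝ
  U0 : Matrix (Fin n) (Fin n) ℝ

namespace Dat

variable {n : ℕ} (D : Dat n)

/-- The standing assumptions of the paper. -/
structure Good : Prop where
  hn : 1 ≤ n
  hQoff : ∀ i j, i ≠ j → 0 ≤ D.Q i j
  hQrow : ∀ i, ∑ j, D.Q i j = 0
  hQirr : MatIrr D.Q
  hs : ∀ i, 0 < D.s i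
  hνc : ∀ i, ContinuousOn (D.ν i) (Set.Ioi 0)
  hν0 : ∀ i, ∀ x ∈ Set.Ioi (0:ℝ), 0 ≤ D.ν i x
  hνi : ∀ i, IntegrableOn (D.ν i) (Set.Ioi 0)
  hU0d : ∀ i, D.U0 i i = 1
  hU0o : ∀ i j, i ≠ j → D.U0 i j ∈ Set.Icc (0:ℝ) 1
  hμc : ∀ i j, i ≠ j → ContinuousOn (D.μ i j) (Set.Ioi 0)
  hμ0 : ∀ i j, ∀ x ∈ Set.Ioi (0:ℝ), 0 ≤ D.μ i j x
  hμi : ∀ i j, i ≠ j → IntegrableOn (D.μ i j) (Set.Ioi 0)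
  hμU : ∀ i j, i ≠ j → D.U0 i j + ∫ x in Set.Ioi (0:ℝ), D.μ i j x = 1
  hμd : ∀ i x, D.μ i i x = 0

/-- `Δ_a`. -/
def Da : Matrix (Fin n) (Fin n) ℝ := Matrix.diagonal D.a

/-- `Δ_{σ²}`. -/
def Ds : Matrix (Fin n) (Fin n) ℝ := Matrix.diagonal fun i => (D.s i)^2

/-- `Δ_ν(x)`. -/
def Dν (x : ℝ) : Matrix (Fin n) (Fin n) ℝ := Matrix.diagonal fun i => D.ν i x

/-- `Q ∘ μ(x)` (Hadamard product). -/
def Qμ (x : ℝ) : Matrix (Fin n) (Fin n) ℝ := Matrix.of fun i j => D.Q i j * D.μ i j x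

/-- The matrix function `F`. -/
def F (Y : Matrix (Fin n) (Fin n) ℝ) : Matrix (Fin n) (Fin n) ℝ :=
  D.Da * Y + (1/2 : ℝ) • (D.Ds * (Y * Y))
    + intP (fun x => D.Dν x * (mexp (x • Y) - 1))
    + Matrix.hadamard D.Q D.U0
    + intP (fun x => D.Qμ x * mexp (x • Y))

/-- The drift `κ`, relative to the stationary vector `π` of `Q`. -/
def kappa (π : Fin n → ℝ) : ℝ :=
  ∑ i, π i * (D.a i + (∫ x in Set.Ioi (0:ℝ), x * D.ν i x)
    + ∑ j, D.Q i j * ∫ x in Set.Ioi (0:ℝ), x * D.μ i j x)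

/-- `π` is the (positive) stationary probability vector of `Q`. -/
def IsStat (π : Fin n → ℝ) : Prop :=
  (∀ i, 0 < π i) ∧ (∀ j, ∑ i, π i * D.Q i j = 0) ∧ ∑ i, π i = 1

/-- `H(τ, W)`. -/
def H (τ : ℝ) (W : Matrix (Fin n) (Fin n) ℝ) : Matrix (Fin n) (Fin n) ℝ :=
  intP (fun x => D.Dν x * (mexp ((τ⁻¹ * x) • (W - 1)) - 1))

/-- `K(τ, W)`. -/
def K (τ : ℝ) (W : Matrix (Fin n) (Fin n) ℝ) : Matrix (Fin n) (Fin n) ℝ :=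
  Matrix.hadamard D.Q D.U0 + intP (fun x => D.Qμ x * mexp ((τ⁻¹ * x) • (W - 1)))

/-- `B_1`. -/
def B1 : Matrix (Fin n) (Fin n) ℝ := D.Ds

/-- `B_0(τ)`. -/
def B0 (τ : ℝ) : Matrix (Fin n) (Fin n) ℝ := (2*τ) • D.Da - (2:ℝ) • D.Ds

/-- `B_{-1}(τ, W)`. -/
def Bm1 (τ : ℝ) (W : Matrix (Fin n) (Fin n) ℝ) : Matrix (Fin n) (Fin n) ℝ :=
  D.Ds - (2*τ) • D.Da + (2*τ^2) • (D.H τ W + D.K τ W)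

/-- Equation (QW): `B₁W² + B₀(τ)W + B₋₁(τ,W) = 0`. -/
def QW (τ : ℝ) (W : Matrix (Fin n) (Fin n) ℝ) : Prop :=
  D.B1 * (W * W) + D.B0 τ * W + D.Bm1 τ W = 0

/-- `B̃_{-1}(τ, W) = −B₀(τ)⁻¹ B₋₁(τ,W)`. -/
def Btm1 (τ : ℝ) (W : Matrix (Fin n) (Fin n) ℝ) : Matrix (Fin n) (Fin n) ℝ :=
  -(D.B0 τ)⁻¹ * D.Bm1 τ W

/-- `B̃_1(τ) = −B₀(τ)⁻¹ B₁`. -/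
def Bt1 (τ : ℝ) : Matrix (Fin n) (Fin n) ℝ := -(D.B0 τ)⁻¹ * D.B1

/-- `0 < τ < τ*`: `troot i` is the unique positive root `τ_i` of the quadratic
`σ_i² − 2τ a_i + 2τ²(q_ii − ∫_0^∞ ν_i)`, `τ` is positive, `τ < σ_i²/a_i` whenever
`a_i > 0`, and `τ < τ_i` for all `i`. -/
def TauOK (troot : Fin n → ℝ) (τ : ℝ) : Prop :=
  (∀ i, 0 < troot i ∧
      (D.s i)^2 - 2 * troot i * D.a i
        + 2 * (troot i)^2 * (D.Q i i - ∫ x in Set.Ioi (0:ℝ), D.ν i x) = 0 ∧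
      ∀ t > 0, (D.s i)^2 - 2 * t * D.a i
        + 2 * t^2 * (D.Q i i - ∫ x in Set.Ioi (0:ℝ), D.ν i x) = 0 → t = troot i) ∧
  0 < τ ∧ (∀ i, 0 < D.a i → τ < (D.s i)^2 / D.a i) ∧ (∀ i, τ < troot i)

/-- `ρ_i = ∫_0^∞ ν_i`. -/
def rho (i : Fin n) : ℝ := ∫ x in Set.Ioi (0:ℝ), D.ν i x

/-- `λ_i = ρ_i + |q_ii|`. -/
def lam (i : Fin n) : ℝ := D.rho i + |D.Q i i|

/-- `b_i`. -/
def b (i : Fin n) : ℝ := (Real.sqrt ((D.a i)^2 + 2 * D.lam i * (D.s i)^2) + D.a i) / (D.s i)^2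

/-- `c_i`. -/
def c (i : Fin n) : ℝ := D.b i - 2 * D.a i / (D.s i)^2

/-- `Ĉ(X)`. -/
def Chat (X : Matrix (Fin n) (Fin n) ℝ) : Matrix (Fin n) (Fin n) ℝ :=
  Matrix.hadamard (D.Q - Matrix.diagonal fun i => D.Q i i) D.U0
    + intP (fun x => D.Dν x * mexp (x • (X - Matrix.diagonal D.b)))
    + intP (fun x => D.Qμ x * mexp (x • (X - Matrix.diagonal D.b)))

/-- `NARE(W)`: the Riccati equation `S² − Δ_c S − S Δ_b + 2Δ_{σ²}⁻¹ Ĉ(W) = 0` in `S`. -/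
def NARE (W S : Matrix (Fin n) (Fin n) ℝ) : Prop :=
  S * S - Matrix.diagonal D.c * S - S * Matrix.diagonal D.b
    + (2:ℝ) • (Matrix.diagonal (fun i => ((D.s i)^2)⁻¹) * D.Chat W) = 0

/-- `S` is the minimal nonnegative solution of `NARE(W)`. -/
def MinSolNARE (W S : Matrix (Fin n) (Fin n) ℝ) : Prop :=
  (∀ i j, 0 ≤ S i j) ∧ D.NARE W S ∧
    ∀ T, (∀ i j, 0 ≤ T i j) → D.NARE W T → ∀ i j, S i j ≤ T i j

/-- `Λ` (relative to `G`). -/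
def Lam (G : Matrix (Fin n) (Fin n) ℝ) : Matrix (Fin n) (Fin n) ℝ :=
  intP (fun x => D.Dν x * cumExp G x) + intP (fun x => D.Qμ x * cumExp G x)

/-- `Θ = −2Δ_a − Δ_{σ²}G − 2Λ` (relative to `G`). -/
def Theta (G : Matrix (Fin n) (Fin n) ℝ) : Matrix (Fin n) (Fin n) ℝ :=
  (-2 : ℝ) • D.Da - D.Ds * G - (2:ℝ) • D.Lam G

/-- Integrability of the first moments `∫ x ν_i(x) dx`, `∫ x μ_ij(x) dx`. -/
def Moments : Prop :=
  (∀ i, IntegrableOn (fun x => x * D.ν i x) (Set.Ioi (0:ℝ))) ∧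
  (∀ i j, IntegrableOn (fun x => x * D.μ i j x) (Set.Ioi (0:ℝ)))

end Dat

/-!
Because `B₀(τ)` is a negative diagonal matrix, (QW) says that `W` is a fixed point of
`T(W) = -B₀(τ)⁻¹ (B₋₁(τ, W) + Δ_{σ²} W²)`, and `W_{k+1} = T(W_k)`. The kernel `e^{τ⁻¹(W−I)x}` is
substochastic and increasing in `W`, so `H + K` is the constant `Q ∘ U(0) − Δ_ρ` plus an integral
that is nonnegative, increasing and continuous in `W`, with row sums at most those of
`Δ_ρ − Q ∘ U(0)`. For `0 < τ < τ*`, `τ < σᵢ²/aᵢ` makes `−B₀(τ)` positive and `τ < τᵢ` makes the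
diagonal of `B₋₁(τ, W)` nonnegative; hence `T` maps substochastic matrices monotonically and
continuously to substochastic matrices. Kleene's argument then applies: the iterates of `T` from `0`
increase, converge, and their limit is a fixed point lying below every substochastic fixed point.
-/

open Set Topology
open scoped Nat

section EntrywiseOrder

variable {ι : Type*} [Fintype ι] {R : Type*} [CommSemiring R]

theorem Matrix.sum_mul_apply (X Y : Matrix ι ι R) (i : ι) :
    ∑ j, (X * Y) i j = ∑ k, X i k * ∑ j, Y k j := by
  simp only [Matrix.mul_apply, Finset.mul_sum]
  exact Finset.sum_comm

variable [PartialOrder R] [IsOrderedRing R]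

theorem Matrix.mul_apply_nonneg {X Y : Matrix ι ι R} (hX : ∀ i j, 0 ≤ X i j)
    (hY : ∀ i j, 0 ≤ Y i j) (i j : ι) : 0 ≤ (X * Y) i j :=
  Finset.sum_nonneg fun k _ => mul_nonneg (hX i k) (hY k j)

theorem Matrix.mul_apply_mono {X Y X' Y' : Matrix ι ι R} (hX : ∀ i j, 0 ≤ X i j)
    (hY : ∀ i j, 0 ≤ Y i j) (hXX' : ∀ i j, X i j ≤ X' i j) (hYY' : ∀ i j, Y i j ≤ Y' i j)
    (i j : ι) : (X * Y) i j ≤ (X' * Y') i j :=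
  Finset.sum_le_sum fun k _ =>
    mul_le_mul (hXX' i k) (hYY' k j) (hY k j) ((hX i k).trans (hXX' i k))

theorem Matrix.sum_mul_apply_le {X Y : Matrix ι ι R} {c : R} (hX : ∀ i j, 0 ≤ X i j)
    (hY : ∀ i, ∑ j, Y i j ≤ c) (i : ι) : ∑ j, (X * Y) i j ≤ (∑ k, X i k) * c := by
  rw [Matrix.sum_mul_apply, Finset.sum_mul]
  exact Finset.sum_le_sum fun k _ => mul_le_mul_of_nonneg_left (hY k) (hX i k)

variable [DecidableEq ι]

theorem Matrix.pow_apply_mono {A B : Matrix ι ι R} (hA : ∀ i j, 0 ≤ A i j)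
    (hAB : ∀ i j, A i j ≤ B i j) (k : ℕ) (i j : ι) : (A ^ k) i j ≤ (B ^ k) i j := by
  induction k generalizing i j with
  | zero => rfl
  | succ k ih =>
    rw [pow_succ, pow_succ]
    exact Matrix.mul_apply_mono (Matrix.pow_apply_nonneg hA k) hA ih hAB i j

theorem Matrix.sum_pow_apply_le {A : Matrix ι ι R} {c : R} (hc : 0 ≤ c) (hA : ∀ i j, 0 ≤ A i j)
    (hrow : ∀ i, ∑ j, A i j ≤ c) (k : ℕ) (i : ι) : ∑ j, (A ^ k) i j ≤ c ^ k := by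
  induction k generalizing i with
  | zero => simp [Matrix.one_apply]
  | succ k ih =>
    rw [pow_succ, pow_succ]
    exact (Matrix.sum_mul_apply_le (Matrix.pow_apply_nonneg hA k) hrow i).trans
      (mul_le_mul_of_nonneg_right (ih i) hc)

end EntrywiseOrder

section MatrixExp

variable {ι : Type*} [Fintype ι] [DecidableEq ι] {A B : Matrix ι ι ℝ}

theorem Matrix.exp_hasSum_apply (A : Matrix ι ι ℝ) (i j : ι) :
    HasSum (fun k : ℕ => (k ! : ℝ)⁻¹ * (A ^ k) i j) (NormedSpace.exp A i j) := by
  open scoped Norms.Operator in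
  have h := NormedSpace.exp_series_hasSum_exp' (𝕂 := ℝ) A
  exact Pi.hasSum.1 (Pi.hasSum.1 h i) j

theorem Matrix.continuous_exp :
    Continuous (NormedSpace.exp : Matrix ι ι ℝ → Matrix ι ι ℝ) := by
  open scoped Norms.Operator in
  let _ : NormedAlgebra ℚ (Matrix ι ι ℝ) := NormedAlgebra.restrictScalars ℚ ℝ _
  exact NormedSpace.exp_continuous

theorem Matrix.exp_smul_one (c : ℝ) :
    NormedSpace.exp (c • (1 : Matrix ι ι ℝ)) = Real.exp c • (1 : Matrix ι ι ℝ) := by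
  open scoped Norms.Operator in
  rw [← Algebra.algebraMap_eq_smul_one, ← Algebra.algebraMap_eq_smul_one, Real.exp_eq_exp_ℝ]
  exact (NormedSpace.algebraMap_exp_comm c).symm

theorem Matrix.exp_smul_sub_one (t : ℝ) (W : Matrix ι ι ℝ) :
    NormedSpace.exp (t • (W - 1)) = Real.exp (-t) • NormedSpace.exp (t • W) := by
  have hsplit : t • (W - 1) = (-t) • (1 : Matrix ι ι ℝ) + t • W := by
    rw [smul_sub, neg_smul]; abel
  rw [hsplit, Matrix.exp_add_of_commute _ _ ((Commute.one_left W).smul_left _ |>.smul_right _),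
    Matrix.exp_smul_one, smul_one_mul]

theorem Matrix.exp_apply_nonneg (hA : ∀ i j, 0 ≤ A i j) (i j : ι) :
    0 ≤ NormedSpace.exp A i j :=
  (Matrix.exp_hasSum_apply A i j).nonneg fun k =>
    mul_nonneg (by positivity) (Matrix.pow_apply_nonneg hA k i j)

theorem Matrix.exp_apply_mono (hA : ∀ i j, 0 ≤ A i j) (hAB : ∀ i j, A i j ≤ B i j) (i j : ι) :
    NormedSpace.exp A i j ≤ NormedSpace.exp B i j :=
  hasSum_le (fun k => mul_le_mul_of_nonneg_left (Matrix.pow_apply_mono hA hAB k i j)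
    (by positivity)) (Matrix.exp_hasSum_apply A i j) (Matrix.exp_hasSum_apply B i j)

theorem Matrix.sum_exp_apply_le {c : ℝ} (hc : 0 ≤ c) (hA : ∀ i j, 0 ≤ A i j)
    (hrow : ∀ i, ∑ j, A i j ≤ c) (i : ι) : ∑ j, NormedSpace.exp A i j ≤ Real.exp c := by
  have hsum : HasSum (fun k : ℕ => (k ! : ℝ)⁻¹ * ∑ j, (A ^ k) i j)
      (∑ j, NormedSpace.exp A i j) := by
    simpa only [Finset.mul_sum] using hasSum_sum fun j _ => Matrix.exp_hasSum_apply A i j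
  refine hasSum_le (fun k => mul_le_mul_of_nonneg_left (Matrix.sum_pow_apply_le hc hA hrow k i)
    (by positivity)) hsum ?_
  simpa [Real.exp_eq_exp_ℝ, smul_eq_mul] using NormedSpace.exp_series_hasSum_exp' (𝕂 := ℝ) c

end MatrixExp

section Substoch

variable {n : ℕ} {W W' X Y : Matrix (Fin n) (Fin n) ℝ}

theorem substoch_zero : Substoch (0 : Matrix (Fin n) (Fin n) ℝ) :=
  ⟨fun _ _ => le_rfl, fun _ => by simp⟩

theorem Substoch.apply_le_one (hW : Substoch W) (i j : Fin n) : W i j ≤ 1 :=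
  (Finset.single_le_sum (fun k _ => hW.1 i k) (Finset.mem_univ j)).trans (hW.2 i)

theorem Substoch.mul (hX : Substoch X) (hY : Substoch Y) : Substoch (X * Y) :=
  ⟨Matrix.mul_apply_nonneg hX.1 hY.1, fun i =>
    (Matrix.sum_mul_apply_le hX.1 hY.2 i).trans (by simpa using hX.2 i)⟩

theorem isClosed_setOf_substoch : IsClosed {W : Matrix (Fin n) (Fin n) ℝ | Substoch W} := by
  have hentry : ∀ i j, Continuous fun W : Matrix (Fin n) (Fin n) ℝ => W i j :=
    continuous_id.matrix_elem
  simp only [Substoch, Set.ofPred_and, Set.ofPred_forall]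
  exact (isClosed_iInter fun i => isClosed_iInter fun j =>
    isClosed_le continuous_const (hentry i j)).inter
    (isClosed_iInter fun i => isClosed_le (continuous_finsetSum _ fun j _ => hentry i j)
      continuous_const)

theorem Substoch.mexp_smul_sub_one {t : ℝ} (ht : 0 ≤ t) (hW : Substoch W) :
    Substoch (mexp (t • (W - 1))) := by
  have htW : ∀ i j, 0 ≤ (t • W) i j := fun i j => mul_nonneg ht (hW.1 i j)
  have hrow : ∀ i, ∑ j, (t • W) i j ≤ t := fun i => by
    simpa [← Finset.mul_sum] using mul_le_mul_of_nonneg_left (hW.2 i) ht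
  rw [mexp, Matrix.exp_smul_sub_one]
  refine ⟨fun i j => mul_nonneg (Real.exp_nonneg _) (Matrix.exp_apply_nonneg htW i j),
    fun i => ?_⟩
  calc ∑ j, (Real.exp (-t) • NormedSpace.exp (t • W)) i j
      = Real.exp (-t) * ∑ j, NormedSpace.exp (t • W) i j := by
        simp [Matrix.smul_apply, Finset.mul_sum]
    _ ≤ Real.exp (-t) * Real.exp t :=
        mul_le_mul_of_nonneg_left (Matrix.sum_exp_apply_le ht htW hrow i) (Real.exp_nonneg _)
    _ = 1 := by rw [← Real.exp_add, neg_add_cancel, Real.exp_zero]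

theorem mexp_smul_sub_one_mono {t : ℝ} (ht : 0 ≤ t) (hW : ∀ i j, 0 ≤ W i j)
    (hWW' : ∀ i j, W i j ≤ W' i j) (i j : Fin n) :
    mexp (t • (W - 1)) i j ≤ mexp (t • (W' - 1)) i j := by
  simp only [mexp, Matrix.exp_smul_sub_one, Matrix.smul_apply, smul_eq_mul]
  exact mul_le_mul_of_nonneg_left (Matrix.exp_apply_mono (fun i j => mul_nonneg ht (hW i j))
    (fun i j => mul_le_mul_of_nonneg_left (hWW' i j) ht) i j) (Real.exp_nonneg _)

theorem continuous_mexp_mul_smul_sub_one (c : ℝ) (W : Matrix (Fin n) (Fin n) ℝ) :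
    Continuous fun x : ℝ => mexp ((c * x) • (W - 1)) :=
  Matrix.continuous_exp.comp ((continuous_const.mul continuous_id).smul continuous_const)

theorem continuous_mexp_smul_sub_one (t : ℝ) :
    Continuous fun W : Matrix (Fin n) (Fin n) ℝ => mexp (t • (W - 1)) :=
  Matrix.continuous_exp.comp (by fun_prop)

theorem Substoch.mexp_inv_mul_smul_sub_one {τ x : ℝ}
    (hτ : 0 < τ) (hW : Substoch W) (hx : x ∈ Ioi (0:ℝ)) :
    Substoch (mexp ((τ⁻¹ * x) • (W - 1))) :=
  hW.mexp_smul_sub_one (mul_nonneg (inv_nonneg.2 hτ.le) (le_of_lt hx))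

theorem exists_tendsto_of_monotone_of_substoch {u : ℕ → Matrix (Fin n) (Fin n) ℝ}
    (hu : ∀ k, Substoch (u k)) (hmono : ∀ k i j, u k i j ≤ u (k + 1) i j) :
    ∃ L, Tendsto u atTop (𝓝 L) := by
  refine ⟨Matrix.of fun i j => ⨆ k, u k i j, tendsto_pi_nhds.2 fun i =>
    tendsto_pi_nhds.2 fun j => tendsto_atTop_ciSup (monotone_nat_of_le_succ fun k => hmono k i j)
      ⟨1, ?_⟩⟩
  rintro _ ⟨k, rfl⟩
  exact (hu k).apply_le_one i j

theorem tendsto_iterate_least_fixedPoint_of_substoch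
    {f : Matrix (Fin n) (Fin n) ℝ → Matrix (Fin n) (Fin n) ℝ}
    (hf : ∀ X, Substoch X → Substoch (f X))
    (hmono : ∀ X Y, Substoch X → Substoch Y → (∀ i j, X i j ≤ Y i j) → ∀ i j, f X i j ≤ f Y i j)
    (hcont : ContinuousOn f {X | Substoch X}) :
    (∀ k, Substoch (f^[k] 0) ∧ ∀ i j, f^[k] 0 i j ≤ f^[k + 1] 0 i j) ∧
    ∃ L, Tendsto (fun k => f^[k] 0) atTop (𝓝 L) ∧ Substoch L ∧ f L = L ∧
      ∀ X, Substoch X → f X = X → ∀ i j, L i j ≤ X i j := by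
  have hsub : ∀ k, Substoch (f^[k] 0) := fun k => by
    induction k with
    | zero => exact substoch_zero
    | succ k ih => rw [Function.iterate_succ_apply']; exact hf _ ih
  have hstep : ∀ k i j, f^[k] 0 i j ≤ f^[k + 1] 0 i j := fun k => by
    induction k with
    | zero => exact (hsub 1).1
    | succ k ih =>
      rw [Function.iterate_succ_apply', Function.iterate_succ_apply' _ (k + 1)]
      exact hmono _ _ (hsub k) (hsub (k + 1)) ih
  have hbelow : ∀ X, Substoch X → f X = X → ∀ k i j, f^[k] 0 i j ≤ X i j := by
    intro X hX hfX k
    induction k with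
    | zero => exact hX.1
    | succ k ih =>
      rw [Function.iterate_succ_apply', ← hfX]
      exact hmono _ _ (hsub k) hX ih
  obtain ⟨L, hL⟩ := exists_tendsto_of_monotone_of_substoch hsub hstep
  have hLsub : Substoch L :=
    isClosed_setOf_substoch.mem_of_tendsto hL (Eventually.of_forall hsub)
  have hfix : f L = L := by
    refine tendsto_nhds_unique ?_ ((tendsto_add_atTop_iff_nat 1).2 hL)
    simp only [Function.iterate_succ_apply']
    exact (hcont L hLsub).tendsto.comp
      (tendsto_nhdsWithin_iff.2 ⟨hL, Eventually.of_forall hsub⟩)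
  refine ⟨fun k => ⟨hsub k, hstep k⟩, L, hL, hLsub, hfix, fun X hX hfX i j => ?_⟩
  exact le_of_tendsto' ((hL.apply_nhds i).apply_nhds j) fun k => hbelow X hX hfX k i j

end Substoch

section KernelIntegral

variable {n : ℕ} {M : ℝ → Matrix (Fin n) (Fin n) ℝ}

theorem norm_mul_substoch_apply_le {A P : Matrix (Fin n) (Fin n) ℝ} (hA : ∀ i j, 0 ≤ A i j)
    (hP : Substoch P) (i j : Fin n) : ‖(A * P) i j‖ ≤ ∑ k, A i k := by
  rw [Real.norm_of_nonneg (Matrix.mul_apply_nonneg hA hP.1 i j), Matrix.mul_apply]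
  exact Finset.sum_le_sum fun k _ => mul_le_of_le_one_right (hA i k) (hP.apply_le_one k j)

theorem integrableOn_mul_substoch_apply (hM0 : ∀ x ∈ Ioi (0:ℝ), ∀ i j, 0 ≤ M x i j)
    (hMi : ∀ i j, IntegrableOn (fun x => M x i j) (Ioi 0)) {P : ℝ → Matrix (Fin n) (Fin n) ℝ}
    (hPc : Continuous P) (hP : ∀ x ∈ Ioi (0:ℝ), Substoch (P x)) (i j : Fin n) :
    IntegrableOn (fun x => (M x * P x) i j) (Ioi 0) := by
  refine Integrable.mono' (integrable_finsetSum Finset.univ fun k _ => hMi i k) ?_ ?_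
  · simp only [Matrix.mul_apply]
    exact Finset.aestronglyMeasurable_fun_sum _ fun k _ =>
      (hMi i k).aestronglyMeasurable.mul (hPc.matrix_elem k j).aestronglyMeasurable
  · filter_upwards [self_mem_ae_restrict measurableSet_Ioi] with x hx
    exact norm_mul_substoch_apply_le (hM0 x hx) (hP x hx) i j

theorem intP_mul_substoch_nonneg (hM0 : ∀ x ∈ Ioi (0:ℝ), ∀ i j, 0 ≤ M x i j)
    {P : ℝ → Matrix (Fin n) (Fin n) ℝ} (hP : ∀ x ∈ Ioi (0:ℝ), Substoch (P x)) (i j : Fin n) :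
    0 ≤ intP (fun x => M x * P x) i j :=
  setIntegral_nonneg measurableSet_Ioi fun x hx =>
    Matrix.mul_apply_nonneg (hM0 x hx) (hP x hx).1 i j

theorem sum_intP_mul_substoch_le (hM0 : ∀ x ∈ Ioi (0:ℝ), ∀ i j, 0 ≤ M x i j)
    (hMi : ∀ i j, IntegrableOn (fun x => M x i j) (Ioi 0)) {P : ℝ → Matrix (Fin n) (Fin n) ℝ}
    (hPc : Continuous P) (hP : ∀ x ∈ Ioi (0:ℝ), Substoch (P x)) (i : Fin n) :
    ∑ j, intP (fun x => M x * P x) i j ≤ ∑ k, ∫ x in Ioi (0:ℝ), M x i k := by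
  simp only [intP, Matrix.of_apply]
  rw [← integral_finsetSum _ fun j _ => integrableOn_mul_substoch_apply hM0 hMi hPc hP i j,
    ← integral_finsetSum _ fun k _ => hMi i k]
  refine setIntegral_mono_on (integrable_finsetSum _ fun j _ =>
    integrableOn_mul_substoch_apply hM0 hMi hPc hP i j) (integrable_finsetSum _ fun k _ => hMi i k)
    measurableSet_Ioi fun x hx => ?_
  simpa using Matrix.sum_mul_apply_le (hM0 x hx) (hP x hx).2 i

theorem intP_mul_substoch_mono (hM0 : ∀ x ∈ Ioi (0:ℝ), ∀ i j, 0 ≤ M x i j)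
    (hMi : ∀ i j, IntegrableOn (fun x => M x i j) (Ioi 0)) {P P' : ℝ → Matrix (Fin n) (Fin n) ℝ}
    (hPc : Continuous P) (hP'c : Continuous P') (hP : ∀ x ∈ Ioi (0:ℝ), Substoch (P x))
    (hP' : ∀ x ∈ Ioi (0:ℝ), Substoch (P' x)) (hPP' : ∀ x ∈ Ioi (0:ℝ), ∀ i j, P x i j ≤ P' x i j)
    (i j : Fin n) : intP (fun x => M x * P x) i j ≤ intP (fun x => M x * P' x) i j :=
  setIntegral_mono_on (integrableOn_mul_substoch_apply hM0 hMi hPc hP i j)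
    (integrableOn_mul_substoch_apply hM0 hMi hP'c hP' i j) measurableSet_Ioi fun x hx =>
    Matrix.mul_apply_mono (hM0 x hx) (hP x hx).1 (fun _ _ => le_rfl) (hPP' x hx) i j

theorem continuousOn_intP_mul_substoch {α : Type*} [TopologicalSpace α] [FirstCountableTopology α]
    {s : Set α} (hM0 : ∀ x ∈ Ioi (0:ℝ), ∀ i j, 0 ≤ M x i j)
    (hMi : ∀ i j, IntegrableOn (fun x => M x i j) (Ioi 0)) {P : α → ℝ → Matrix (Fin n) (Fin n) ℝ}
    (hPc : ∀ a ∈ s, Continuous (P a)) (hP : ∀ a ∈ s, ∀ x ∈ Ioi (0:ℝ), Substoch (P a x))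
    (hPs : ∀ x ∈ Ioi (0:ℝ), ContinuousOn (fun a => P a x) s) :
    ContinuousOn (fun a => intP fun x => M x * P a x) s := by
  intro a ha
  refine tendsto_pi_nhds.2 fun i => tendsto_pi_nhds.2 fun j => ?_
  have hs : ∀ᶠ b in 𝓝[s] a, b ∈ s := self_mem_nhdsWithin
  refine tendsto_integral_filter_of_dominated_convergence (fun x => ∑ k, M x i k)
    (hs.mono fun b hb => (integrableOn_mul_substoch_apply hM0 hMi (hPc b hb) (hP b hb) i j).1)
    (hs.mono fun b hb => ?_) (integrable_finsetSum Finset.univ fun k _ => hMi i k) ?_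
  · filter_upwards [self_mem_ae_restrict measurableSet_Ioi] with x hx
    exact norm_mul_substoch_apply_le (hM0 x hx) (hP b hb x hx) i j
  · filter_upwards [self_mem_ae_restrict measurableSet_Ioi] with x hx
    exact ((continuous_const.matrix_mul continuous_id).matrix_elem i j |>.tendsto _).comp
      (hPs x hx a ha)

end KernelIntegral

instance Matrix.firstCountableTopology {m n R : Type*} [Countable m] [Countable n]
    [TopologicalSpace R] [FirstCountableTopology R] : FirstCountableTopology (Matrix m n R) :=
  inferInstanceAs (FirstCountableTopology (m → n → R))

theorem quadratic_pos_of_lt_root {σ2 a c r τ : ℝ} (hσ : 0 < σ2) (hc : c ≤ 0) (hr : 0 < r)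
    (hroot : σ2 - 2 * r * a + 2 * r ^ 2 * c = 0) (hτ : 0 < τ) (hτr : τ < r) :
    0 < σ2 - 2 * τ * a + 2 * τ ^ 2 * c := by
  nlinarith [mul_pos (sub_pos.2 hτr) hσ,
    mul_nonneg (mul_nonneg (mul_nonneg (neg_nonneg.2 hc) hτ.le) hr.le) (sub_pos.2 hτr).le]

namespace Dat

variable {n : ℕ} {D : Dat n} {troot : Fin n → ℝ} {τ : ℝ} {W W' X Y : Matrix (Fin n) (Fin n) ℝ}

def jumpDensity (D : Dat n) (x : ℝ) : Matrix (Fin n) (Fin n) ℝ := D.Dν x + D.Qμ x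

theorem Good.Dν_nonneg (hD : D.Good) : ∀ x ∈ Ioi (0:ℝ), ∀ i j, 0 ≤ D.Dν x i j := by
  intro x hx i j
  rcases eq_or_ne i j with rfl | hij
  · simpa [Dν] using hD.hν0 i x hx
  · simp [Dν, hij]

theorem Good.Qμ_nonneg (hD : D.Good) : ∀ x ∈ Ioi (0:ℝ), ∀ i j, 0 ≤ D.Qμ x i j := by
  intro x hx i j
  rcases eq_or_ne i j with rfl | hij
  · simp [Qμ, hD.hμd]
  · exact mul_nonneg (hD.hQoff i j hij) (hD.hμ0 i j x hx)

theorem Good.integrableOn_Dν (hD : D.Good) (i j : Fin n) :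
    IntegrableOn (fun x => D.Dν x i j) (Ioi 0) := by
  rcases eq_or_ne i j with rfl | hij
  · simpa [Dν] using hD.hνi i
  · simp [Dν, hij]

theorem Good.integrableOn_Qμ (hD : D.Good) (i j : Fin n) :
    IntegrableOn (fun x => D.Qμ x i j) (Ioi 0) := by
  rcases eq_or_ne i j with rfl | hij
  · simp [Qμ, hD.hμd]
  · exact (hD.hμi i j hij).const_mul (D.Q i j)

theorem Good.jumpDensity_nonneg (hD : D.Good) : ∀ x ∈ Ioi (0:ℝ), ∀ i j, 0 ≤ D.jumpDensity x i j :=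
  fun x hx i j => add_nonneg (hD.Dν_nonneg x hx i j) (hD.Qμ_nonneg x hx i j)

theorem Good.integrableOn_jumpDensity (hD : D.Good) (i j : Fin n) :
    IntegrableOn (fun x => D.jumpDensity x i j) (Ioi 0) :=
  (hD.integrableOn_Dν i j).add (hD.integrableOn_Qμ i j)

theorem intP_Dν : intP D.Dν = Matrix.diagonal D.rho := by
  ext i j
  rcases eq_or_ne i j with rfl | hij
  · simp [intP, Dν, rho]
  · simp [intP, Dν, hij]

theorem Good.sum_hadamard_sub_diagonal_rho_add_integral_jumpDensity (hD : D.Good) (i : Fin n) :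
    ∑ j, (Matrix.hadamard D.Q D.U0 - Matrix.diagonal D.rho) i j
      + ∑ k, ∫ x in Ioi (0:ℝ), D.jumpDensity x i k = 0 := by
  have hjump : ∀ k, ∫ x in Ioi (0:ℝ), D.jumpDensity x i k
      = Matrix.diagonal D.rho i k + D.Q i k * ∫ x in Ioi (0:ℝ), D.μ i k x := by
    intro k
    simp only [jumpDensity, Matrix.add_apply]
    rw [integral_add (hD.integrableOn_Dν i k) (hD.integrableOn_Qμ i k), ← intP_Dν]
    simp [intP, Qμ, integral_const_mul]
  have hrow : ∀ k, D.Q i k * D.U0 i k + D.Q i k * ∫ x in Ioi (0:ℝ), D.μ i k x = D.Q i k := by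
    intro k
    rcases eq_or_ne i k with rfl | hik
    · simp [hD.hU0d, hD.hμd]
    · rw [← mul_add, hD.hμU i k hik, mul_one]
  have hsum := Finset.sum_congr rfl fun k (_ : k ∈ Finset.univ) => hrow k
  rw [Finset.sum_add_distrib, hD.hQrow i] at hsum
  simp only [hjump, Matrix.sub_apply, Matrix.hadamard_apply, Finset.sum_add_distrib,
    Finset.sum_sub_distrib]
  linarith

theorem H_add_K (hD : D.Good) (hτ : 0 < τ) (hW : Substoch W) :
    D.H τ W + D.K τ W = Matrix.hadamard D.Q D.U0 - Matrix.diagonal D.rho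
      + intP (fun x => D.jumpDensity x * mexp ((τ⁻¹ * x) • (W - 1))) := by
  have hPc := continuous_mexp_mul_smul_sub_one τ⁻¹ W
  have hP : ∀ x ∈ Ioi (0:ℝ), Substoch (mexp ((τ⁻¹ * x) • (W - 1))) :=
    fun x hx => hW.mexp_inv_mul_smul_sub_one hτ hx
  ext i j
  rw [← intP_Dν]
  simp only [H, K, jumpDensity, intP, Matrix.add_apply, Matrix.sub_apply, Matrix.of_apply,
    Matrix.mul_sub, Matrix.mul_one, Matrix.add_mul]
  rw [integral_sub (integrableOn_mul_substoch_apply hD.Dν_nonneg hD.integrableOn_Dν hPc hP i j)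
      (hD.integrableOn_Dν i j),
    integral_add (integrableOn_mul_substoch_apply hD.Dν_nonneg hD.integrableOn_Dν hPc hP i j)
      (integrableOn_mul_substoch_apply hD.Qμ_nonneg hD.integrableOn_Qμ hPc hP i j)]
  ring

theorem Good.Q_self_nonpos (hD : D.Good) (i : Fin n) : D.Q i i ≤ 0 := by
  have hoff : 0 ≤ ∑ j ∈ Finset.univ.erase i, D.Q i j :=
    Finset.sum_nonneg fun j hj => hD.hQoff i j (Finset.ne_of_mem_erase hj).symm
  linarith [Finset.sum_erase_add _ (D.Q i) (Finset.mem_univ i), hD.hQrow i]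

theorem Good.rho_nonneg (hD : D.Good) (i : Fin n) : 0 ≤ D.rho i :=
  setIntegral_nonneg measurableSet_Ioi fun x hx => hD.hν0 i x hx

theorem TauOK.quadratic_pos (hD : D.Good) (hτ : D.TauOK troot τ) (i : Fin n) :
    0 < D.s i ^ 2 - 2 * τ * D.a i + 2 * τ ^ 2 * (D.Q i i - D.rho i) :=
  quadratic_pos_of_lt_root (pow_pos (hD.hs i) 2)
    (by linarith [hD.Q_self_nonpos i, hD.rho_nonneg i]) (hτ.1 i).1 (hτ.1 i).2.1 hτ.2.1 (hτ.2.2.2 i)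

theorem Bm1_eq (hD : D.Good) (hτ : 0 < τ) (hW : Substoch W) :
    D.Bm1 τ W = D.Ds - (2 * τ) • D.Da + (2 * τ ^ 2) • (Matrix.hadamard D.Q D.U0
      - Matrix.diagonal D.rho + intP (fun x => D.jumpDensity x * mexp ((τ⁻¹ * x) • (W - 1)))) := by
  rw [Bm1, H_add_K hD hτ hW]

theorem Bm1_nonneg (hD : D.Good) (hτ : D.TauOK troot τ) (hW : Substoch W) (i j : Fin n) :
    0 ≤ D.Bm1 τ W i j := by
  have hJ := intP_mul_substoch_nonneg hD.jumpDensity_nonneg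
    (fun x hx => hW.mexp_inv_mul_smul_sub_one hτ.2.1 hx) i j
  rw [Bm1_eq hD hτ.2.1 hW]
  rcases eq_or_ne i j with rfl | hij
  · have hq := hτ.quadratic_pos hD i
    simp only [Ds, Da, Matrix.add_apply, Matrix.sub_apply, Matrix.smul_apply,
      Matrix.diagonal_apply_eq, Matrix.hadamard_apply, hD.hU0d, smul_eq_mul] at hJ ⊢
    nlinarith
  · have hQU : 0 ≤ D.Q i j * D.U0 i j := mul_nonneg (hD.hQoff i j hij) (hD.hU0o i j hij).1
    simp only [Ds, Da, Matrix.add_apply, Matrix.sub_apply, Matrix.smul_apply,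
      Matrix.diagonal_apply_ne _ hij, Matrix.hadamard_apply, smul_eq_mul, mul_zero, sub_zero]
    positivity

theorem sum_Bm1_le (hD : D.Good) (hτ : 0 < τ) (hW : Substoch W) (i : Fin n) :
    ∑ j, D.Bm1 τ W i j ≤ D.s i ^ 2 - 2 * τ * D.a i := by
  have hJ := sum_intP_mul_substoch_le hD.jumpDensity_nonneg hD.integrableOn_jumpDensity
    (continuous_mexp_mul_smul_sub_one τ⁻¹ W) (fun x hx => hW.mexp_inv_mul_smul_sub_one hτ hx) i
  have hbal := hD.sum_hadamard_sub_diagonal_rho_add_integral_jumpDensity i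
  rw [Bm1_eq hD hτ hW]
  simp only [Matrix.add_apply, Matrix.sub_apply, Matrix.smul_apply, smul_eq_mul,
    Finset.sum_add_distrib, Finset.sum_sub_distrib, ← Finset.mul_sum] at hbal ⊢
  simp only [Ds, Da, Matrix.diagonal_apply, Finset.sum_ite_eq, Finset.mem_univ,
    if_true] at hbal ⊢
  nlinarith [sq_nonneg τ]

theorem Bm1_mono (hD : D.Good) (hτ : 0 < τ) (hW : Substoch W) (hW' : Substoch W')
    (hWW' : ∀ i j, W i j ≤ W' i j) (i j : Fin n) : D.Bm1 τ W i j ≤ D.Bm1 τ W' i j := by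
  have hJ := intP_mul_substoch_mono hD.jumpDensity_nonneg hD.integrableOn_jumpDensity
    (continuous_mexp_mul_smul_sub_one τ⁻¹ W) (continuous_mexp_mul_smul_sub_one τ⁻¹ W')
    (fun x hx => hW.mexp_inv_mul_smul_sub_one hτ hx)
    (fun x hx => hW'.mexp_inv_mul_smul_sub_one hτ hx)
    (fun x hx => mexp_smul_sub_one_mono (mul_nonneg (inv_nonneg.2 hτ.le) (le_of_lt hx)) hW.1 hWW')
    i j
  rw [Bm1_eq hD hτ hW, Bm1_eq hD hτ hW']
  simp only [Matrix.add_apply, Matrix.sub_apply, Matrix.smul_apply, smul_eq_mul]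
  nlinarith [sq_nonneg τ]

theorem continuousOn_Bm1 (hD : D.Good) (hτ : 0 < τ) :
    ContinuousOn (D.Bm1 τ) {W | Substoch W} := by
  have hJ : ContinuousOn (fun W => intP fun x => D.jumpDensity x * mexp ((τ⁻¹ * x) • (W - 1)))
      {W | Substoch W} :=
    continuousOn_intP_mul_substoch hD.jumpDensity_nonneg hD.integrableOn_jumpDensity
      (fun W _ => continuous_mexp_mul_smul_sub_one τ⁻¹ W)
      (fun W hW x hx => Substoch.mexp_inv_mul_smul_sub_one hτ hW hx)
      (fun x _ => (continuous_mexp_smul_sub_one _).continuousOn)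
  refine ContinuousOn.congr ?_ fun W hW => Bm1_eq hD hτ hW
  fun_prop

def fixedPointMap (D : Dat n) (τ : ℝ) (X : Matrix (Fin n) (Fin n) ℝ) :
    Matrix (Fin n) (Fin n) ℝ :=
  D.Btm1 τ X + D.Bt1 τ * (X * X)

theorem TauOK.negB0_diag_pos (hD : D.Good) (hτ : D.TauOK troot τ) (i : Fin n) :
    0 < 2 * D.s i ^ 2 - 2 * τ * D.a i := by
  have hs := pow_pos (hD.hs i) 2
  rcases lt_or_ge 0 (D.a i) with ha | ha
  · have := (lt_div_iff₀ ha).1 (hτ.2.2.1 i ha)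
    linarith
  · nlinarith [mul_nonpos_of_nonneg_of_nonpos hτ.2.1.le ha]

theorem B0_eq : D.B0 τ = Matrix.diagonal fun i => -(2 * D.s i ^ 2 - 2 * τ * D.a i) := by
  ext i j
  rcases eq_or_ne i j with rfl | hij
  · simp [B0, Da, Ds]
  · simp [B0, Da, Ds, hij]

theorem neg_B0_inv (hD : D.Good) (hτ : D.TauOK troot τ) :
    -(D.B0 τ)⁻¹ = Matrix.diagonal fun i => (2 * D.s i ^ 2 - 2 * τ * D.a i)⁻¹ := by
  rw [neg_eq_iff_eq_neg, Matrix.diagonal_neg]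
  refine Matrix.inv_eq_left_inv ?_
  rw [B0_eq, Matrix.diagonal_mul_diagonal, ← Matrix.diagonal_one]
  congr 1
  ext i
  rw [neg_mul_neg, inv_mul_cancel₀ (hτ.negB0_diag_pos hD i).ne']

theorem fixedPointMap_apply (hD : D.Good) (hτ : D.TauOK troot τ) (X : Matrix (Fin n) (Fin n) ℝ)
    (i j : Fin n) : D.fixedPointMap τ X i j
      = (2 * D.s i ^ 2 - 2 * τ * D.a i)⁻¹ * (D.Bm1 τ X i j + D.s i ^ 2 * (X * X) i j) := by
  rw [fixedPointMap, Btm1, Bt1, Matrix.mul_assoc, neg_B0_inv hD hτ, Matrix.add_apply,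
    Matrix.diagonal_mul, Matrix.diagonal_mul, B1, Ds, Matrix.diagonal_mul, mul_add]

theorem qw_iff_fixedPointMap_eq (hD : D.Good) (hτ : D.TauOK troot τ)
    (X : Matrix (Fin n) (Fin n) ℝ) : D.QW τ X ↔ D.fixedPointMap τ X = X := by
  rw [QW, ← Matrix.ext_iff, ← Matrix.ext_iff]
  refine forall_congr' fun i => forall_congr' fun j => ?_
  rw [fixedPointMap_apply hD hτ, inv_mul_eq_iff_eq_mul₀ (hτ.negB0_diag_pos hD i).ne',
    Matrix.add_apply, Matrix.add_apply, B1, Ds, B0_eq, Matrix.diagonal_mul, Matrix.diagonal_mul,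
    Matrix.zero_apply]
  constructor <;> intro h <;> linarith

theorem substoch_fixedPointMap (hD : D.Good) (hτ : D.TauOK troot τ) (hX : Substoch X) :
    Substoch (D.fixedPointMap τ X) := by
  have hd := hτ.negB0_diag_pos hD
  refine ⟨fun i j => ?_, fun i => ?_⟩
  · rw [fixedPointMap_apply hD hτ]
    exact mul_nonneg (inv_nonneg.2 (hd i).le) (add_nonneg (Bm1_nonneg hD hτ hX i j)
      (mul_nonneg (sq_nonneg _) (Matrix.mul_apply_nonneg hX.1 hX.1 i j)))
  · simp only [fixedPointMap_apply hD hτ, ← Finset.mul_sum, Finset.sum_add_distrib]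
    rw [inv_mul_le_one₀ (hd i)]
    nlinarith [sum_Bm1_le hD hτ.2.1 hX i, (hX.mul hX).2 i, sq_nonneg (D.s i)]

theorem fixedPointMap_mono (hD : D.Good) (hτ : D.TauOK troot τ) (hX : Substoch X)
    (hY : Substoch Y) (hXY : ∀ i j, X i j ≤ Y i j) (i j : Fin n) :
    D.fixedPointMap τ X i j ≤ D.fixedPointMap τ Y i j := by
  rw [fixedPointMap_apply hD hτ, fixedPointMap_apply hD hτ]
  exact mul_le_mul_of_nonneg_left (add_le_add (Bm1_mono hD hτ.2.1 hX hY hXY i j)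
    (mul_le_mul_of_nonneg_left (Matrix.mul_apply_mono hX.1 hX.1 hXY hXY i j) (sq_nonneg _)))
    (inv_nonneg.2 (hτ.negB0_diag_pos hD i).le)

theorem continuousOn_fixedPointMap (hD : D.Good) (hτ : 0 < τ) :
    ContinuousOn (D.fixedPointMap τ) {X | Substoch X} := by
  have hB := continuousOn_Bm1 hD hτ
  unfold fixedPointMap Btm1
  fun_prop

end Dat

/-- Theorem 6 of the paper: monotone convergence of the natural
fixed-point iteration to the minimal substochastic solution of (QW). -/
theorem stmt6 {n : ℕ} (D : Dat n) (hD : D.Good) (troot : Fin n → ℝ) (τ : ℝ)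
    (hτ : D.TauOK troot τ) (W : ℕ → Matrix (Fin n) (Fin n) ℝ) (hW0 : W 0 = 0)
    (hWrec : ∀ k, W (k+1) = D.Btm1 τ (W k) + D.Bt1 τ * (W k * W k)) :
    (∀ k, (∀ i j, 0 ≤ W k i j) ∧ (∀ i j, W k i j ≤ W (k+1) i j) ∧
      (∀ i, ∑ j, W (k+1) i j ≤ 1)) ∧
    ∃ Wmin : Matrix (Fin n) (Fin n) ℝ,
      Filter.Tendsto W Filter.atTop (nhds Wmin) ∧ Substoch Wmin ∧ D.QW τ Wmin ∧
      ∀ W', Substoch W' → D.QW τ W' → ∀ i j, Wmin i j ≤ W' i j := by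
  have hW : W = fun k => (D.fixedPointMap τ)^[k] 0 := by
    funext k
    induction k with
    | zero => exact hW0
    | succ k ih => rw [hWrec, ih, Function.iterate_succ_apply']; rfl
  obtain ⟨hmono, L, hL, hLsub, hLfix, hLmin⟩ := tendsto_iterate_least_fixedPoint_of_substoch
    (fun _ hX => Dat.substoch_fixedPointMap hD hτ hX)
    (fun _ _ hX hY hXY => Dat.fixedPointMap_mono hD hτ hX hY hXY)
    (Dat.continuousOn_fixedPointMap hD hτ.2.1)
  subst hW
  refine ⟨fun k => ⟨(hmono k).1.1, (hmono k).2, (hmono (k + 1)).1.2⟩, L, hL, hLsub,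
    (Dat.qw_iff_fixedPointMap_eq hD hτ L).2 hLfix, fun W' hW' hQW' => ?_⟩
  exact hLmin W' hW' ((Dat.qw_iff_fixedPointMap_eq hD hτ W').1 hQW')
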